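/- arXiv:1610.03776 — 4 statements merged into one kernel-verified Lean document; each statement's English description precedes it below -/
import Mathlib

section
/- Let ε_N = (ε_1,…,ε_N) be a Poisson sampling scheme with first-order inclusion probabilities p_1,…,p_N ∈ (0,1), and let x_1,…,x_N be fixed real numbers, not all zero. Set A = Σ_{i=1}^N ((1−p_i)/p_i) x_i² and B = max_{1≤i≤N} |x_i|/p_i. Then for every t > 0 and every N ≥ 1, P{ Ŝ_p − S_N > t } ≤ exp( −(A/B²) · H( tB/A ) ), where H(x) = (1+x)log(1+x) − x. -/
/-! `Ŝ_p - S_N` is the sum of the independent centred variables `(ε_i / p_i - 1) x_i`, which are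
bounded above by `B` and whose variances add up to `A`. Since `(e^y - 1 - y) / y ^ 2` is
increasing, `E e^{λY} ≤ exp (Var Y · (e^{λB} - 1 - λB) / B ^ 2)` for each of them, and the
Chernoff bound at `λ = log (1 + tB/A) / B` gives Bennett's inequality. -/

open MeasureTheory ProbabilityTheory Real Finset

/-- `H(x) = (1+x)log(1+x) - x`. -/
noncomputable def entH (x : ℝ) : ℝ := (1 + x) * Real.log (1 + x) - x

lemma exp_sub_one_sub_eq_sq_mul_integral (z : ℝ) :
    exp z - 1 - z = z ^ 2 * ∫ u in (0:ℝ)..1, (1 - u) * exp (u * z) := by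
  rcases eq_or_ne z 0 with rfl | hz
  · simp
  have hF : ∀ u : ℝ, HasDerivAt (fun u => exp (u * z) * ((1 - u) / z + 1 / z ^ 2))
      ((1 - u) * exp (u * z)) u := by
    intro u
    have h1 : HasDerivAt (fun u => exp (u * z)) (exp (u * z) * z) u :=
      (hasDerivAt_mul_const z).exp
    have h2 : HasDerivAt (fun u : ℝ => (1 - u) / z + 1 / z ^ 2) ((0 - 1) / z + 0) u :=
      (((hasDerivAt_const u 1).sub (hasDerivAt_id u)).div_const z).add (hasDerivAt_const u _)
    have h12 : HasDerivAt (fun u => exp (u * z) * ((1 - u) / z + 1 / z ^ 2)) _ u := h1.mul h2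
    convert h12 using 1
    field_simp
    ring
  have hcont : Continuous fun u : ℝ => (1 - u) * exp (u * z) := by fun_prop
  rw [intervalIntegral.integral_eq_sub_of_hasDerivAt (fun u _ => hF u)
    (hcont.intervalIntegrable _ _)]
  simp only [one_mul, zero_mul, exp_zero]
  field_simp
  ring

/-- `(exp y - 1 - y) / y ^ 2` is monotone, in a form valid also at `y = 0`. -/
lemma exp_sub_one_sub_le_of_le {c y : ℝ} (hc : 0 < c) (hy : y ≤ c) :
    exp y - 1 - y ≤ y ^ 2 * ((exp c - 1 - c) / c ^ 2) := by
  have hmono : ∫ u in (0:ℝ)..1, (1 - u) * exp (u * y)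
      ≤ ∫ u in (0:ℝ)..1, (1 - u) * exp (u * c) := by
    refine intervalIntegral.integral_mono_on zero_le_one ?_ ?_ fun u ⟨hu0, hu1⟩ => ?_
    · exact Continuous.intervalIntegrable (by fun_prop) _ _
    · exact Continuous.intervalIntegrable (by fun_prop) _ _
    · gcongr
  rw [exp_sub_one_sub_eq_sq_mul_integral y, exp_sub_one_sub_eq_sq_mul_integral c,
    mul_div_cancel_left₀ _ (by positivity)]
  exact mul_le_mul_of_nonneg_left hmono (sq_nonneg y)

lemma integrable_exp_mul_of_ae_le {Ω : Type*} [MeasurableSpace Ω] {μ : Measure Ω}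
    [IsFiniteMeasure μ] {X : Ω → ℝ} {b t : ℝ} (hX : AEMeasurable X μ)
    (hXb : ∀ᵐ ω ∂μ, X ω ≤ b) (ht : 0 ≤ t) : Integrable (fun ω => exp (t * X ω)) μ := by
  refine Integrable.of_bound (C := exp (t * b)) (by fun_prop) ?_
  filter_upwards [hXb] with ω hω
  rw [norm_eq_abs, abs_exp]
  gcongr

section Bennett

variable {Ω : Type*} [MeasurableSpace Ω] {μ : Measure Ω} [IsProbabilityMeasure μ]

lemma mgf_le_exp_variance_mul {X : Ω → ℝ} {b t : ℝ} (hX : MemLp X 2 μ)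
    (hXb : ∀ᵐ ω ∂μ, X ω ≤ b) (hX0 : μ[X] = 0) (hb : 0 < b) (ht : 0 < t) :
    mgf X μ t ≤ exp (variance X μ * ((exp (t * b) - 1 - t * b) / b ^ 2)) := by
  set K := (exp (t * b) - 1 - t * b) / b ^ 2
  have hpt : ∀ᵐ ω ∂μ, exp (t * X ω) ≤ 1 + t * X ω + K * X ω ^ 2 := by
    filter_upwards [hXb] with ω hω
    have h := exp_sub_one_sub_le_of_le (mul_pos ht hb) (mul_le_mul_of_nonneg_left hω ht.le)
    have hK : (t * X ω) ^ 2 * ((exp (t * b) - 1 - t * b) / (t * b) ^ 2) = K * X ω ^ 2 := by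
      simp only [K]
      field_simp
    linarith
  have hint_lin : Integrable (fun ω => 1 + t * X ω) μ :=
    (integrable_const 1).add ((hX.integrable one_le_two).const_mul t)
  have hint_sq : Integrable (fun ω => K * X ω ^ 2) μ := hX.integrable_sq.const_mul K
  calc mgf X μ t
      ≤ ∫ ω, (1 + t * X ω + K * X ω ^ 2) ∂μ :=
        integral_mono_ae (integrable_exp_mul_of_ae_le hX.aemeasurable hXb ht.le)
          (hint_lin.add hint_sq) hpt
    _ = 1 + variance X μ * K := by
        rw [integral_add hint_lin hint_sq, integral_add (integrable_const 1)
            ((hX.integrable one_le_two).const_mul t), integral_const_mul, integral_const_mul,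
          hX0, variance_of_integral_eq_zero hX.aemeasurable hX0]
        simp only [integral_const, probReal_univ, smul_eq_mul, mul_one, mul_zero, add_zero]
        ring
    _ ≤ exp (variance X μ * K) := by linarith [add_one_le_exp (variance X μ * K)]

/-- The choice `t = log (1 + u) / b` with `u = ε b / v` optimises the Chernoff bound
`exp (-t ε) · exp (v (e^{tb} - 1 - tb) / b ^ 2)`. -/
lemma bennett_exponent_eq {b v ε : ℝ} (hb : 0 < b) (hv : 0 < v) (hε : 0 < ε) :
    -(log (1 + ε * b / v) / b) * ε
        + v * ((exp (log (1 + ε * b / v) / b * b) - 1 - log (1 + ε * b / v) / b * b) / b ^ 2)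
      = -(v / b ^ 2) * entH (ε * b / v) := by
  have hu : 0 < 1 + ε * b / v := by positivity
  rw [div_mul_cancel₀ _ hb.ne', exp_log hu, entH]
  field_simp
  ring

theorem measureReal_sum_ge_le_bennett {ι : Type*} [Fintype ι] {X : ι → Ω → ℝ}
    (h_indep : iIndepFun X μ) (hL2 : ∀ i, MemLp (X i) 2 μ) (h_center : ∀ i, μ[X i] = 0)
    {b : ℝ} (hb : 0 < b) (h_le : ∀ i, ∀ᵐ ω ∂μ, X i ω ≤ b)
    {v : ℝ} (hv : ∑ i, variance (X i) μ = v) (hv0 : 0 < v) {ε : ℝ} (hε : 0 < ε) :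
    μ.real {ω | ε ≤ ∑ i, X i ω} ≤ exp (-(v / b ^ 2) * entH (ε * b / v)) := by
  set t := log (1 + ε * b / v) / b
  set K := (exp (t * b) - 1 - t * b) / b ^ 2
  have ht : 0 < t := div_pos (log_pos (lt_add_of_pos_right 1 (by positivity))) hb
  have hmeas : ∀ i, AEMeasurable (X i) μ := fun i => (hL2 i).aemeasurable
  have hsum_le : ∀ᵐ ω ∂μ, (∑ i, X i) ω ≤ Fintype.card ι * b := by
    filter_upwards [ae_all_iff.mpr h_le] with ω hω
    simpa [Finset.sum_apply] using sum_le_sum fun i (_ : i ∈ univ) => hω i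
  have hmgf : mgf (∑ i, X i) μ t ≤ exp (v * K) := by
    rw [h_indep.mgf_sum₀ hmeas, ← hv, sum_mul, exp_sum]
    exact prod_le_prod (fun i _ => mgf_nonneg) fun i _ =>
      mgf_le_exp_variance_mul (hL2 i) (h_le i) (h_center i) hb ht
  calc μ.real {ω | ε ≤ ∑ i, X i ω}
      ≤ exp (-t * ε) * mgf (∑ i, X i) μ t := by
        simpa only [Finset.sum_apply] using measure_ge_le_exp_mul_mgf ε ht.le
          (integrable_exp_mul_of_ae_le (by fun_prop) hsum_le ht.le)
    _ ≤ exp (-t * ε) * exp (v * K) := by gcongr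
    _ = exp (-(v / b ^ 2) * entH (ε * b / v)) := by
        rw [← exp_add, ← bennett_exponent_eq hb hv0 hε]

end Bennett

lemma abs_div_mul_sub_le {e q x : ℝ} (he : e = 0 ∨ e = 1) (hq0 : 0 < q) (hq1 : q ≤ 1) :
    |e / q * x - x| ≤ |x| / q := by
  have hx : |x| ≤ |x| / q := le_div_self (abs_nonneg x) hq0 hq1
  rcases he with rfl | rfl
  · simpa using hx
  · have h : 1 / q * x - x = (1 - q) / q * x := by field_simp
    rw [h, abs_mul, abs_of_nonneg (by bound), div_mul_eq_mul_div, div_le_div_iff_of_pos_right hq0]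
    nlinarith [abs_nonneg x]

section Bernoulli

variable {Ω : Type*} [MeasurableSpace Ω] {μ : Measure Ω} [IsProbabilityMeasure μ]
  {e : Ω → ℝ} {q : ℝ}

lemma integral_comp_of_eq_zero_or_one (he : Measurable e) (h01 : ∀ ω, e ω = 0 ∨ e ω = 1)
    (hq : 0 ≤ q) (hlaw : μ {ω | e ω = 1} = ENNReal.ofReal q) (f : ℝ → ℝ) :
    ∫ ω, f (e ω) ∂μ = (1 - q) * f 0 + q * f 1 := by
  have hS : MeasurableSet {ω | e ω = 1} := he (measurableSet_singleton 1)
  have he_ind : e = {ω | e ω = 1}.indicator 1 := by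
    funext ω
    rcases h01 ω with h | h <;> simp [h]
  have hint : Integrable e μ := by
    rw [he_ind]
    exact (integrable_const 1).indicator hS
  have hmean : ∫ ω, e ω ∂μ = q := by
    rw [he_ind, integral_indicator_one hS, measureReal_def, hlaw, ENNReal.toReal_ofReal hq]
  have hf : (fun ω => f (e ω)) = fun ω => f 0 + (f 1 - f 0) * e ω := by
    funext ω
    rcases h01 ω with h | h <;> rw [h] <;> ring
  rw [hf, integral_add (integrable_const _) (hint.const_mul _), integral_const,
    integral_const_mul, hmean]
  simp only [probReal_univ, smul_eq_mul, one_mul]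
  ring

lemma integral_div_mul_sub_eq_zero (he : Measurable e) (h01 : ∀ ω, e ω = 0 ∨ e ω = 1)
    (hq : 0 < q) (hlaw : μ {ω | e ω = 1} = ENNReal.ofReal q) (x : ℝ) :
    ∫ ω, (e ω / q * x - x) ∂μ = 0 := by
  rw [integral_comp_of_eq_zero_or_one he h01 hq.le hlaw fun s => s / q * x - x]
  field_simp
  ring

lemma variance_div_mul_sub (he : Measurable e) (h01 : ∀ ω, e ω = 0 ∨ e ω = 1)
    (hq : 0 < q) (hlaw : μ {ω | e ω = 1} = ENNReal.ofReal q) (x : ℝ) :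
    variance (fun ω => e ω / q * x - x) μ = (1 - q) / q * x ^ 2 := by
  rw [variance_of_integral_eq_zero (by fun_prop) (integral_div_mul_sub_eq_zero he h01 hq hlaw x),
    integral_comp_of_eq_zero_or_one he h01 hq.le hlaw fun s => (s / q * x - x) ^ 2]
  field_simp
  ring

lemma memLp_div_mul_sub (he : Measurable e) (h01 : ∀ ω, e ω = 0 ∨ e ω = 1)
    (hq0 : 0 < q) (hq1 : q ≤ 1) (x : ℝ) (r : ENNReal) :
    MemLp (fun ω => e ω / q * x - x) r μ :=
  MemLp.of_bound (by fun_prop) (|x| / q)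
    (ae_of_all _ fun ω => abs_div_mul_sub_le (h01 ω) hq0 hq1)

end Bernoulli

theorem poisson_bennett_general
    {Ω : Type*} [MeasurableSpace Ω] (μ : Measure Ω) [IsProbabilityMeasure μ]
    {N : ℕ} (ε : Ω → Fin N → ℝ) (p x : Fin N → ℝ)
    (hmeas : ∀ i, Measurable fun ω => ε ω i)
    (h01 : ∀ ω i, ε ω i = 0 ∨ ε ω i = 1)
    (hp : ∀ i, 0 < p i ∧ p i < 1)
    (hindep : iIndepFun (fun i ω => ε ω i) μ)
    (hlaw : ∀ i, μ {ω | ε ω i = 1} = ENNReal.ofReal (p i))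
    (hx : ∃ i, x i ≠ 0)
    (A B : ℝ)
    (hA : A = ∑ i, ((1 - p i) / p i) * x i ^ 2)
    (hB : IsGreatest (Set.range fun i => |x i| / p i) B)
    (t : ℝ) (ht : 0 < t) :
    μ {ω | ∑ i, (ε ω i / p i) * x i - ∑ i, x i > t}
      ≤ ENNReal.ofReal (Real.exp (-(A / B ^ 2) * entH (t * B / A))) := by
  obtain ⟨i₀, hxi₀⟩ := hx
  have hBi : ∀ i, |x i| / p i ≤ B := fun i => hB.2 ⟨i, rfl⟩
  have hB0 : 0 < B := (div_pos (abs_pos.2 hxi₀) (hp i₀).1).trans_le (hBi i₀)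
  have hA0 : 0 < A := by
    rw [hA]
    refine sum_pos' (fun i _ => ?_) ⟨i₀, mem_univ i₀, ?_⟩
    · exact mul_nonneg (div_nonneg (sub_nonneg.2 (hp i).2.le) (hp i).1.le) (sq_nonneg _)
    · exact mul_pos (div_pos (sub_pos.2 (hp i₀).2) (hp i₀).1) ((by positivity))
  set Y : Fin N → Ω → ℝ := fun i ω => ε ω i / p i * x i - x i
  have hY_indep : iIndepFun Y μ :=
    hindep.comp (fun i s => s / p i * x i - x i) fun i => by fun_prop
  have hY_le : ∀ i, ∀ᵐ ω ∂μ, Y i ω ≤ B := fun i => ae_of_all _ fun ω =>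
    (le_abs_self _).trans ((abs_div_mul_sub_le (h01 ω i) (hp i).1 (hp i).2.le).trans (hBi i))
  have hY_var : ∑ i, variance (Y i) μ = A := by
    simp only [Y, variance_div_mul_sub (hmeas _) (h01 · _) (hp _).1 (hlaw _), hA]
  have hbennett := measureReal_sum_ge_le_bennett hY_indep
    (fun i => memLp_div_mul_sub (hmeas i) (h01 · i) (hp i).1 (hp i).2.le (x i) 2)
    (fun i => integral_div_mul_sub_eq_zero (hmeas i) (h01 · i) (hp i).1 (hlaw i) (x i))
    hB0 hY_le hY_var hA0 ht
  calc μ {ω | ∑ i, (ε ω i / p i) * x i - ∑ i, x i > t}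
      ≤ μ {ω | t ≤ ∑ i, Y i ω} := measure_mono fun ω hω => by
        simp only [Set.mem_ofPred_eq, Y, sum_sub_distrib] at hω ⊢
        exact hω.le
    _ = ENNReal.ofReal (μ.real {ω | t ≤ ∑ i, Y i ω}) := (ofReal_measureReal).symm
    _ ≤ _ := ENNReal.ofReal_le_ofReal hbennett

/-- Bennett inequality for the Horvitz–Thompson estimator under Poisson sampling. -/
theorem poisson_bennett
    {Ω : Type*} [MeasurableSpace Ω] (μ : Measure Ω) [IsProbabilityMeasure μ]
    {N : ℕ} (hN : 1 ≤ N) (ε : Ω → Fin N → ℝ) (p x : Fin N → ℝ)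
    (hmeas : ∀ i, Measurable fun ω => ε ω i)
    (h01 : ∀ ω i, ε ω i = 0 ∨ ε ω i = 1)
    (hp : ∀ i, 0 < p i ∧ p i < 1)
    (hindep : iIndepFun (fun i ω => ε ω i) μ)
    (hlaw : ∀ i, μ {ω | ε ω i = 1} = ENNReal.ofReal (p i))
    (hx : ∃ i, x i ≠ 0)
    (A B : ℝ)
    (hA : A = ∑ i, ((1 - p i) / p i) * x i ^ 2)
    (hB : IsGreatest (Set.range fun i => |x i| / p i) B)
    (t : ℝ) (ht : 0 < t) :
    μ {ω | ∑ i, (ε ω i / p i) * x i - ∑ i, x i > t}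
      ≤ ENNReal.ofReal (Real.exp (-(A / B ^ 2) * entH (t * B / A))) :=
  poisson_bennett_general μ ε p x hmeas h01 hp hindep hlaw hx A B hA hB t ht
end

section
/- Let Z_1,…,Z_N be square-integrable negatively associated real-valued random variables with E[Z_i] = 0 and |Z_i| ≤ c almost surely (c > 0) for 1 ≤ i ≤ N, and let a_1,…,a_N be constants with 0 ≤ a_i ≤ 1. Set σ² = (1/N) Σ_{i=1}^N a_i² Var(Z_i) and assume σ² > 0. Then for all t > 0 and all N ≥ 1, P{ Σ_{i=1}^N a_i Z_i ≥ t } ≤ exp( −(Nσ²/c²) · H( ct/(Nσ²) ) ), where H(x) = (1+x)log(1+x) − x. -/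
/-!
Bennett's argument goes through under negative association because independence is only used
to bound the moment generating function of the sum by the product of the individual ones: the
factors `exp (s * a i * Z i)` are nondecreasing in `Z i` (for `s, a i ≥ 0`), so negative
association gives exactly this inequality. Each factor is then bounded via
`exp x ≤ 1 + x + (exp b - 1 - b) / b ^ 2 * x ^ 2` for `|x| ≤ b`, and the Chernoff bound at the
optimal `s = log (1 + c t / (N σ²)) / c` yields the exponent `-(N σ² / c²) H (c t / (N σ²))`.
-/

open MeasureTheory ProbabilityTheory Real Finset
open scoped Nat

/-- Negative association of a finite family of real random variables: for all disjoint
index sets and all bounded measurable coordinatewise-nondecreasing functions, the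
covariance is nonpositive. -/
def NegAssoc {Ω : Type*} [MeasurableSpace Ω] (μ : Measure Ω) {N : ℕ}
    (Z : Fin N → Ω → ℝ) : Prop :=
  ∀ A₁ A₂ : Finset (Fin N), Disjoint A₁ A₂ →
    ∀ f : ({i // i ∈ A₁} → ℝ) → ℝ, ∀ g : ({i // i ∈ A₂} → ℝ) → ℝ,
      Measurable f → Measurable g →
      (∃ C, ∀ y, |f y| ≤ C) → (∃ C, ∀ y, |g y| ≤ C) →
      Monotone f → Monotone g →
      ∫ ω, f (fun i => Z i.1 ω) * g (fun j => Z j.1 ω) ∂μ ≤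
        (∫ ω, f (fun i => Z i.1 ω) ∂μ) * ∫ ω, g (fun j => Z j.1 ω) ∂μ

theorem exp_le_one_add_add_mul_sq_of_abs_le {x b : ℝ} (hb : 0 < b) (hx : |x| ≤ b) :
    exp x ≤ 1 + x + (exp b - 1 - b) / b ^ 2 * x ^ 2 := by
  have hasSum_tail (y : ℝ) : HasSum (fun n ↦ y ^ (n + 2) / (n + 2)!) (exp y - 1 - y) := by
    have := (hasSum_nat_add_iff' 2).mpr (NormedSpace.expSeries_div_hasSum_exp y)
    simpa [sum_range_succ, ← exp_eq_exp_ℝ, sub_sub] using this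
  have hterm (n : ℕ) : x ^ (n + 2) ≤ x ^ 2 / b ^ 2 * b ^ (n + 2) := calc
    x ^ (n + 2) ≤ |x| ^ n * x ^ 2 := by
      rw [← sq_abs, ← pow_add, ← abs_pow]; exact le_abs_self _
    _ ≤ b ^ n * x ^ 2 := by gcongr
    _ = x ^ 2 / b ^ 2 * b ^ (n + 2) := by field_simp; ring
  have := hasSum_le (fun n ↦ div_le_div_of_nonneg_right (hterm n) (by positivity))
    (hasSum_tail x) (((hasSum_tail b).mul_left (x ^ 2 / b ^ 2)).congr_fun fun n ↦ by ring)
  linarith [show (exp b - 1 - b) / b ^ 2 * x ^ 2 = x ^ 2 / b ^ 2 * (exp b - 1 - b) by ring]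

theorem mgf_le_exp_variance_mul_of_abs_le {Ω : Type*} [MeasurableSpace Ω] {μ : Measure Ω}
    [IsProbabilityMeasure μ] {X : Ω → ℝ} {c s : ℝ} (hX : MemLp X 2 μ) (hmean : μ[X] = 0)
    (hc : 0 < c) (hbd : ∀ᵐ ω ∂μ, |X ω| ≤ c) (hs : 0 < s) :
    mgf X μ s ≤ exp (variance X μ * ((exp (s * c) - 1 - s * c) / c ^ 2)) := by
  set K := (exp (s * c) - 1 - s * c) / c ^ 2
  have hK : (exp (s * c) - 1 - s * c) / (s * c) ^ 2 * s ^ 2 = K := by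
    simp only [K]; field_simp
  have hXint : Integrable X μ := hX.integrable one_le_two
  have hlin : Integrable (fun ω ↦ 1 + s * X ω) μ := (integrable_const 1).add (hXint.const_mul s)
  have hpointwise : ∀ᵐ ω ∂μ, exp (s * X ω) ≤ 1 + s * X ω + K * X ω ^ 2 := by
    filter_upwards [hbd] with ω hω
    have hsX : |s * X ω| ≤ s * c := by rw [abs_mul, abs_of_pos hs]; gcongr
    convert exp_le_one_add_add_mul_sq_of_abs_le (by positivity) hsX using 2
    rw [← hK]; ring
  calc mgf X μ s
      ≤ ∫ ω, 1 + s * X ω + K * X ω ^ 2 ∂μ :=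
        integral_mono_ae
          (integrable_exp_mul_of_le s c hs.le hX.aestronglyMeasurable.aemeasurable
            (hbd.mono fun _ ↦ le_of_abs_le))
          (hlin.add (hX.integrable_sq.const_mul K)) hpointwise
    _ = 1 + K * variance X μ := by
        rw [variance_of_integral_eq_zero hX.aestronglyMeasurable.aemeasurable hmean,
          integral_add hlin (hX.integrable_sq.const_mul K), integral_add (integrable_const 1)
          (hXint.const_mul s), integral_const_mul, integral_const_mul, hmean]
        simp
    _ ≤ _ := by linarith [add_one_le_exp (variance X μ * K)]

namespace NegAssoc

variable {Ω : Type*} [MeasurableSpace Ω] {μ : Measure Ω} [IsProbabilityMeasure μ] {N : ℕ}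
  {Z : Fin N → Ω → ℝ}

theorem integral_prod_le_prod_integral (hNA : NegAssoc μ Z) {f : Fin N → ℝ → ℝ}
    (hmeas : ∀ i, Measurable (f i)) (hmono : ∀ i, Monotone (f i)) (hnonneg : ∀ i x, 0 ≤ f i x)
    (hbdd : ∀ i, ∃ C, ∀ x, f i x ≤ C) (A : Finset (Fin N)) :
    ∫ ω, ∏ i ∈ A, f i (Z i ω) ∂μ ≤ ∏ i ∈ A, ∫ ω, f i (Z i ω) ∂μ := by
  choose C hC using hbdd
  induction A using Finset.cons_induction with
  | empty => simp
  | cons i A hi ih =>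
    let F : ({j // j ∈ ({i} : Finset (Fin N))} → ℝ) → ℝ :=
      fun y ↦ f i (y ⟨i, mem_singleton_self i⟩)
    let G : ({j // j ∈ A} → ℝ) → ℝ := fun y ↦ ∏ j ∈ A.attach, f j (y j)
    have hG (ω : Ω) : G (fun j ↦ Z j.1 ω) = ∏ j ∈ A, f j (Z j ω) :=
      prod_attach A fun j ↦ f j (Z j ω)
    have hG_nonneg (y : {j // j ∈ A} → ℝ) : 0 ≤ G y := prod_nonneg fun j _ ↦ hnonneg j _
    have hFG := hNA {i} A (disjoint_singleton_left.2 hi) F G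
      ((hmeas i).comp (measurable_pi_apply _))
      (measurable_prod _ fun j _ ↦ (hmeas j).comp (measurable_pi_apply j))
      ⟨C i, fun y ↦ (abs_of_nonneg (hnonneg i _)).trans_le (hC i _)⟩
      ⟨∏ j ∈ A.attach, C j, fun y ↦ (abs_of_nonneg (hG_nonneg y)).trans_le
        (prod_le_prod (fun j _ ↦ hnonneg j _) fun j _ ↦ hC j _)⟩
      (fun y y' hy ↦ hmono i (hy _))
      (fun y y' hy ↦ prod_le_prod (fun j _ ↦ hnonneg j _) fun j _ ↦ hmono j (hy j))
    simp only [hG, F] at hFG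
    calc ∫ ω, ∏ j ∈ cons i A hi, f j (Z j ω) ∂μ
        = ∫ ω, f i (Z i ω) * ∏ j ∈ A, f j (Z j ω) ∂μ := by simp only [prod_cons]
      _ ≤ (∫ ω, f i (Z i ω) ∂μ) * ∫ ω, ∏ j ∈ A, f j (Z j ω) ∂μ := hFG
      _ ≤ ∏ j ∈ cons i A hi, ∫ ω, f j (Z j ω) ∂μ := by
        rw [prod_cons]
        exact mul_le_mul_of_nonneg_left ih (integral_nonneg fun ω ↦ hnonneg i _)

theorem mgf_sum_le_prod (hNA : NegAssoc μ Z) {a : Fin N → ℝ} (ha : ∀ i, 0 ≤ a i) {c s : ℝ}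
    (hs : 0 ≤ s) (hbd : ∀ i, ∀ᵐ ω ∂μ, Z i ω ≤ c) :
    mgf (fun ω ↦ ∑ i, a i * Z i ω) μ s ≤ ∏ i, mgf (fun ω ↦ a i * Z i ω) μ s := by
  -- truncating at `c` changes nothing almost surely and makes the factors bounded
  let f : Fin N → ℝ → ℝ := fun i x ↦ exp (s * (a i * min x c))
  have htrunc : ∀ᵐ ω ∂μ, ∀ i, min (Z i ω) c = Z i ω :=
    (ae_all_iff.2 hbd).mono fun ω h i ↦ min_eq_left (h i)
  have hf_le {i : Fin N} {x y : ℝ} (hxy : min x c ≤ min y c) : f i x ≤ f i y :=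
    exp_le_exp.2 (mul_le_mul_of_nonneg_left (mul_le_mul_of_nonneg_left hxy (ha i)) hs)
  have hprod := hNA.integral_prod_le_prod_integral (f := f) (fun i ↦ by fun_prop)
    (fun i x y hxy ↦ hf_le (min_le_min_right c hxy)) (fun i x ↦ exp_nonneg _)
    (fun i ↦ ⟨f i c, fun x ↦ hf_le (by simp)⟩) univ
  calc mgf (fun ω ↦ ∑ i, a i * Z i ω) μ s
      = ∫ ω, ∏ i, f i (Z i ω) ∂μ := by
        refine integral_congr_ae (htrunc.mono fun ω h ↦ ?_)
        simp only [f, h, ← exp_sum, mul_sum]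
    _ ≤ ∏ i, ∫ ω, f i (Z i ω) ∂μ := hprod
    _ = ∏ i, mgf (fun ω ↦ a i * Z i ω) μ s := by
        refine prod_congr rfl fun i _ ↦ integral_congr_ae (htrunc.mono fun ω h ↦ ?_)
        simp only [f, h]

end NegAssoc

theorem neg_mul_add_mul_eq_entH {v c t s : ℝ} (hv : v ≠ 0) (hc : c ≠ 0)
    (hs : exp (s * c) = 1 + c * t / v) :
    -s * t + v * ((exp (s * c) - 1 - s * c) / c ^ 2) = -(v / c ^ 2) * entH (c * t / v) := by
  have hlog : log (1 + c * t / v) = s * c := by rw [← hs, log_exp]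
  rw [entH, hlog, hs]
  field_simp
  ring

theorem negAssoc_bennett_general
    {Ω : Type*} [MeasurableSpace Ω] (μ : Measure Ω) [IsProbabilityMeasure μ]
    {N : ℕ} (Z : Fin N → Ω → ℝ)
    (hL2 : ∀ i, MemLp (Z i) 2 μ)
    (hNA : NegAssoc μ Z)
    (c : ℝ) (hc : 0 < c) (hbd : ∀ i, ∀ᵐ ω ∂μ, |Z i ω| ≤ c)
    (hmean : ∀ i, ∫ ω, Z i ω ∂μ = 0)
    (a : Fin N → ℝ) (ha : ∀ i, 0 ≤ a i ∧ a i ≤ 1)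
    (σ2 : ℝ) (hσ2 : σ2 = (1 / (N : ℝ)) * ∑ i, a i ^ 2 * variance (Z i) μ)
    (hσpos : 0 < σ2)
    (t : ℝ) (ht : 0 < t) :
    μ {ω | ∑ i, a i * Z i ω ≥ t}
      ≤ ENNReal.ofReal
          (Real.exp (-((N : ℝ) * σ2 / c ^ 2) * entH (c * t / ((N : ℝ) * σ2)))) := by
  have hN : (N : ℝ) ≠ 0 := fun h ↦ by simp [h] at hσ2; linarith
  set v := (N : ℝ) * σ2
  have hv : 0 < v := mul_pos (lt_of_le_of_ne N.cast_nonneg (Ne.symm hN)) hσpos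
  have hvar : ∑ i, variance (fun ω ↦ a i * Z i ω) μ = v := by
    simp only [variance_const_mul, v, hσ2]
    field_simp
  set s := log (1 + c * t / v) / c
  have hs : 0 < s := div_pos (log_pos (by simp; positivity)) hc
  have hexp : exp (s * c) = 1 + c * t / v := by
    rw [div_mul_cancel₀ _ hc.ne', exp_log (by positivity)]
  have haZ (i : Fin N) : ∀ᵐ ω ∂μ, |a i * Z i ω| ≤ c := (hbd i).mono fun ω h ↦ by
    rw [abs_mul, abs_of_nonneg (ha i).1]
    exact (mul_le_mul (ha i).2 h (abs_nonneg _) zero_le_one).trans_eq (one_mul c)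
  have hmgf : mgf (fun ω ↦ ∑ i, a i * Z i ω) μ s ≤
      exp (v * ((exp (s * c) - 1 - s * c) / c ^ 2)) := calc
    _ ≤ ∏ i, mgf (fun ω ↦ a i * Z i ω) μ s :=
      hNA.mgf_sum_le_prod (fun i ↦ (ha i).1) hs.le (fun i ↦ (hbd i).mono fun _ ↦ le_of_abs_le)
    _ ≤ ∏ i, exp (variance (fun ω ↦ a i * Z i ω) μ * ((exp (s * c) - 1 - s * c) / c ^ 2)) :=
      prod_le_prod (fun _ _ ↦ mgf_nonneg) fun i _ ↦ mgf_le_exp_variance_mul_of_abs_le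
        ((hL2 i).const_mul (a i)) (by rw [integral_const_mul, hmean, mul_zero]) hc (haZ i) hs
    _ = exp (v * ((exp (s * c) - 1 - s * c) / c ^ 2)) := by rw [← exp_sum, ← sum_mul, hvar]
  have hint : Integrable (fun ω ↦ exp (s * ∑ i, a i * Z i ω)) μ :=
    integrable_exp_mul_of_le s (∑ _ : Fin N, c) hs.le
      (aemeasurable_fun_sum _ fun i _ ↦ (hL2 i).aestronglyMeasurable.aemeasurable.const_mul _)
      ((ae_all_iff.2 haZ).mono fun ω h ↦ sum_le_sum fun i _ ↦ le_of_abs_le (h i))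
  rw [← neg_mul_add_mul_eq_entH hv.ne' hc.ne' hexp, exp_add,
    ENNReal.le_ofReal_iff_toReal_le (measure_ne_top _ _) (by positivity)]
  exact (measure_ge_le_exp_mul_mgf t hs.le hint).trans
    (mul_le_mul_of_nonneg_left hmgf (exp_nonneg _))

/-- Bennett inequality for sums of bounded, centered, negatively associated random
variables. -/
theorem negAssoc_bennett
    {Ω : Type*} [MeasurableSpace Ω] (μ : Measure Ω) [IsProbabilityMeasure μ]
    {N : ℕ} (hN : 1 ≤ N) (Z : Fin N → Ω → ℝ) (hmeas : ∀ i, Measurable (Z i))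
    (hL2 : ∀ i, MemLp (Z i) 2 μ)
    (hNA : NegAssoc μ Z)
    (c : ℝ) (hc : 0 < c) (hbd : ∀ i, ∀ᵐ ω ∂μ, |Z i ω| ≤ c)
    (hmean : ∀ i, ∫ ω, Z i ω ∂μ = 0)
    (a : Fin N → ℝ) (ha : ∀ i, 0 ≤ a i ∧ a i ≤ 1)
    (σ2 : ℝ) (hσ2 : σ2 = (1 / (N : ℝ)) * ∑ i, a i ^ 2 * variance (Z i) μ)
    (hσpos : 0 < σ2)
    (t : ℝ) (ht : 0 < t) :
    μ {ω | ∑ i, a i * Z i ω ≥ t}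
      ≤ ENNReal.ofReal
          (Real.exp (-((N : ℝ) * σ2 / c ^ 2) * entH (c * t / ((N : ℝ) * σ2)))) :=
  negAssoc_bennett_general μ Z hL2 hNA c hc hbd hmean a ha σ2 hσ2 hσpos t ht
end

section
/- Let ε*_N = (ε*_1,…,ε*_N) be a rejective sampling scheme of size n on {1,…,N} with canonical parameter p = (p_1,…,p_N) ∈ (0,1)^N, Σ_{i=1}^N p_i = n. Then the binary random variables ε*_1,…,ε*_N are negatively associated: for every pair of disjoint subsets A_1, A_2 of {1,…,N} and every pair of real-valued bounded measurable functions f and g, defined on {0,1}^{#A_1} and {0,1}^{#A_2} respectively and nondecreasing in each coordinate, Cov( f((ε*_i)_{i∈A_1}), g((ε*_j)_{j∈A_2}) ) ≤ 0. -/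
open MeasureTheory ProbabilityTheory Real Finset

/-- The (unnormalized) weight of a sample `s` under Poisson weights `p`. -/
noncomputable def rejWeight {N : ℕ} (p : Fin N → ℝ) (s : Finset (Fin N)) : ℝ :=
  (∏ i ∈ s, p i) * ∏ i ∈ sᶜ, (1 - p i)

/-- `ε` is a rejective (conditional Poisson) sampling scheme of size `n` with
canonical parameter `p`: it is a `{0,1}`-valued random vector whose law puts, on each
subset `s` of cardinality `n`, probability proportional to
`∏_{i∈s} p i * ∏_{i∉s} (1 - p i)`, and zero probability elsewhere. -/
def IsRejective {Ω : Type*} [MeasurableSpace Ω] (μ : Measure Ω) {N : ℕ} (n : ℕ)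
    (p : Fin N → ℝ) (ε : Ω → Fin N → ℝ) : Prop :=
  (∀ ω i, ε ω i = 0 ∨ ε ω i = 1) ∧
  (∀ i, Measurable fun ω => ε ω i) ∧
  ∀ s : Finset (Fin N),
    μ {ω | ∀ i, ε ω i = if i ∈ s then 1 else 0} =
      if s.card = n then
        ENNReal.ofReal
          (rejWeight p s /
            ∑ u ∈ Finset.univ.filter (fun u : Finset (Fin N) => u.card = n), rejWeight p u)
      else 0

/-! With the odds `w i = p i / (1 - p i)`, the law of the sample is proportional to
`∏_{i ∈ s} w i` on the `n`-subsets `s`, so the claim is an inequality between the sums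
`cpSum w n E F`, proved by induction on the ground set `E`. Conditioning on whether a unit `i`
is sampled writes the law as a mixture of the laws of sizes `n - 1` and `n` on `E \ {i}`, to
which the induction hypothesis applies; the mixture inherits the inequality as soon as the
conditional mean gaps `E[F | i ∈ S] - E[F | i ∉ S]` and `E[G | i ∈ S] - E[G | i ∉ S]` have
opposite signs. Such a pivot `i` exists: by Efron's monotonicity (means of monotone functions
increase with the sample size, a consequence of Newton's inequality) the gap of `F` is
nonpositive outside `A` and that of `G` outside `B`, while the `w`-weighted gaps of `F` sum to
zero because the sample size is constant. -/

section ConditionalPoisson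

variable {ι : Type*}

/-- `cpSum w k E F / cpSum w k E 1` is the mean of `F` under conditional Poisson sampling of
size `k` from `E` with odds `w`. -/
noncomputable def cpSum (w : ι → ℝ) (k : ℕ) (E : Finset ι) (F : Finset ι → ℝ) : ℝ :=
  ∑ s ∈ E.powersetCard k, (∏ i ∈ s, w i) * F s

lemma cpSum_zero (w : ι → ℝ) (E : Finset ι) (F : Finset ι → ℝ) : cpSum w 0 E F = F ∅ := by
  simp [cpSum]

lemma cpSum_of_card_lt (w : ι → ℝ) {k : ℕ} {E : Finset ι} (F : Finset ι → ℝ) (h : E.card < k) :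
    cpSum w k E F = 0 := by
  simp [cpSum, powersetCard_eq_empty.2 h]

lemma cpSum_card (w : ι → ℝ) (E : Finset ι) (F : Finset ι → ℝ) :
    cpSum w E.card E F = (∏ i ∈ E, w i) * F E := by
  simp [cpSum, powersetCard_self]

lemma cpSum_mono {w : ι → ℝ} (hw : ∀ i, 0 ≤ w i) {k : ℕ} {E : Finset ι} {F G : Finset ι → ℝ}
    (h : ∀ s ⊆ E, F s ≤ G s) : cpSum w k E F ≤ cpSum w k E G :=
  sum_le_sum fun s hs =>
    mul_le_mul_of_nonneg_left (h s (mem_powersetCard.1 hs).1) (prod_nonneg fun i _ => hw i)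

lemma cpSum_one_nonneg {w : ι → ℝ} (hw : ∀ i, 0 ≤ w i) (k : ℕ) (E : Finset ι) :
    0 ≤ cpSum w k E 1 :=
  sum_nonneg fun _ _ => mul_nonneg (prod_nonneg fun i _ => hw i) zero_le_one

lemma cpSum_one_pos {w : ι → ℝ} (hw : ∀ i, 0 < w i) {k : ℕ} {E : Finset ι} (hk : k ≤ E.card) :
    0 < cpSum w k E 1 :=
  sum_pos (fun _ _ => by simpa using prod_pos fun i _ => hw i) (powersetCard_nonempty.2 hk)

section Insert

variable [DecidableEq ι]

lemma cpSum_insert (w : ι → ℝ) (k : ℕ) {E : Finset ι} {i : ι} (hi : i ∉ E) (F : Finset ι → ℝ) :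
    cpSum w (k + 1) (insert i E) F =
      cpSum w (k + 1) E F + w i * cpSum w k E (fun t => F (insert i t)) := by
  have hiE : ∀ t ∈ E.powersetCard k, i ∉ t := fun t ht h => hi ((mem_powersetCard.1 ht).1 h)
  rw [cpSum, powersetCard_succ_insert hi, sum_union, sum_image, cpSum, cpSum, mul_sum]
  · congr 1
    refine sum_congr rfl fun t ht => ?_
    rw [prod_insert (hiE t ht)]
    ring
  · intro s hs t ht hst
    rw [← erase_insert (hiE s hs), ← erase_insert (hiE t ht), hst]
  · refine disjoint_left.2 fun s hs hs' => ?_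
    obtain ⟨t, -, rfl⟩ := mem_image.1 hs'
    exact hi ((mem_powersetCard.1 hs).1 (mem_insert_self i t))

lemma cpSum_one_insert (w : ι → ℝ) (k : ℕ) {E : Finset ι} {i : ι} (hi : i ∉ E) :
    cpSum w (k + 1) (insert i E) 1 = cpSum w (k + 1) E 1 + w i * cpSum w k E 1 :=
  cpSum_insert w k hi 1

lemma cpSum_eq_erase_add (w : ι → ℝ) (k : ℕ) {E : Finset ι} {i : ι} (hi : i ∈ E)
    (F : Finset ι → ℝ) :
    cpSum w (k + 1) E F =
      cpSum w (k + 1) (E.erase i) F + w i * cpSum w k (E.erase i) (fun t => F (insert i t)) := by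
  conv_lhs => rw [← insert_erase hi]
  exact cpSum_insert w k (notMem_erase i E) F

lemma cpSum_one_eq_erase_add (w : ι → ℝ) (k : ℕ) {E : Finset ι} {i : ι} (hi : i ∈ E) :
    cpSum w (k + 1) E 1 = cpSum w (k + 1) (E.erase i) 1 + w i * cpSum w k (E.erase i) 1 :=
  cpSum_eq_erase_add w k hi 1

end Insert

lemma logConcave_add_mul_shift {w z₀ z₁ z₂ z₃ : ℝ} (hw : 0 ≤ w) (h₁ : 0 < z₁)
    (h₂ : 0 < z₂) (h₃ : 0 ≤ z₃) (h₀₂ : z₀ * z₂ ≤ z₁ ^ 2) (h₁₃ : z₁ * z₃ ≤ z₂ ^ 2) :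
    (z₁ + w * z₀) * (z₃ + w * z₂) ≤ (z₂ + w * z₁) ^ 2 := by
  have h₀₃ : z₀ * z₃ ≤ z₁ * z₂ := by
    refine le_of_mul_le_mul_right ?_ (mul_pos h₁ h₂)
    calc z₀ * z₃ * (z₁ * z₂) = (z₀ * z₂) * (z₁ * z₃) := by ring
      _ ≤ z₁ ^ 2 * z₂ ^ 2 := mul_le_mul h₀₂ h₁₃ (by positivity) (by positivity)
      _ = z₁ * z₂ * (z₁ * z₂) := by ring
  nlinarith [mul_le_mul_of_nonneg_left h₀₃ hw, mul_le_mul_of_nonneg_left h₀₂ (mul_nonneg hw hw)]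

/-- Newton's inequality for elementary symmetric polynomials. -/
theorem cpSum_one_mul_le_sq [DecidableEq ι] {w : ι → ℝ} (hw : ∀ i, 0 < w i) (E : Finset ι)
    (k : ℕ) : cpSum w k E 1 * cpSum w (k + 2) E 1 ≤ cpSum w (k + 1) E 1 ^ 2 := by
  have hw₀ : ∀ i, 0 ≤ w i := fun i => (hw i).le
  induction E using Finset.induction_on generalizing k with
  | empty =>
    rw [cpSum_of_card_lt w 1 (show (∅ : Finset ι).card < k + 2 by simp), mul_zero]
    positivity
  | insert i E hi IH =>
    rcases lt_or_ge (insert i E).card (k + 2) with hk | hk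
    · rw [cpSum_of_card_lt w 1 hk, mul_zero]
      positivity
    rw [card_insert_of_notMem hi] at hk
    cases k with
    | zero =>
      have h := IH 0
      simp only [cpSum_zero, Pi.one_apply, one_mul] at h ⊢
      rw [cpSum_one_insert w 1 hi, cpSum_one_insert w 0 hi, cpSum_zero, Pi.one_apply]
      nlinarith [cpSum_one_nonneg hw₀ 1 E, hw i]
    | succ k =>
      rw [cpSum_one_insert w k hi, cpSum_one_insert w (k + 1) hi, cpSum_one_insert w (k + 2) hi]
      exact logConcave_add_mul_shift (hw i).le
        (cpSum_one_pos hw (by omega)) (cpSum_one_pos hw (by omega)) (cpSum_one_nonneg hw₀ _ E)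
        (IH k) (IH (k + 1))

lemma efron_step {w A A' B B' Y₀ Y₁ Y₂ : ℝ} (hw : 0 ≤ w) (hY₀ : 0 ≤ Y₀) (hY₁ : 0 < Y₁)
    (hY₂ : 0 ≤ Y₂) (hA : A * Y₁ ≤ A' * Y₀) (hB : B * Y₂ ≤ B' * Y₁) (hBA : B ≤ A')
    (hY : Y₀ * Y₂ ≤ Y₁ ^ 2) :
    (B + w * A) * (Y₂ + w * Y₁) ≤ (B' + w * A') * (Y₁ + w * Y₀) := by
  have hmid : B * Y₁ + A * Y₂ ≤ B' * Y₀ + A' * Y₁ := by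
    refine le_of_mul_le_mul_right ?_ (pow_pos hY₁ 2)
    nlinarith [mul_le_mul_of_nonneg_right hA (mul_nonneg hY₁.le hY₂),
      mul_le_mul_of_nonneg_right hB (mul_nonneg hY₀ hY₁.le),
      mul_le_mul_of_nonneg_left hY (mul_nonneg (sub_nonneg.2 hBA) hY₁.le)]
  nlinarith [mul_le_mul_of_nonneg_left hmid hw, mul_le_mul_of_nonneg_left hA (mul_nonneg hw hw)]

/-- Efron's monotonicity of conditional Poisson means in the sample size. -/
theorem cpSum_mul_cpSum_one_succ_le [DecidableEq ι] {w : ι → ℝ} (hw : ∀ i, 0 < w i)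
    {F : Finset ι → ℝ} (hF : Monotone F) (E : Finset ι) (k : ℕ) :
    cpSum w k E F * cpSum w (k + 1) E 1 ≤ cpSum w (k + 1) E F * cpSum w k E 1 := by
  have hw₀ : ∀ i, 0 ≤ w i := fun i => (hw i).le
  induction E using Finset.induction_on generalizing F k with
  | empty => simp [cpSum_of_card_lt w _ (show (∅ : Finset ι).card < k + 1 by simp)]
  | insert i E hi IH =>
    rcases lt_or_ge (insert i E).card (k + 1) with hk | hk
    · simp [cpSum_of_card_lt w _ hk]
    rw [card_insert_of_notMem hi] at hk
    cases k with
    | zero =>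
      rw [cpSum_zero, cpSum_zero, Pi.one_apply, mul_one, cpSum, cpSum, mul_sum]
      refine sum_le_sum fun s _ => ?_
      rw [Pi.one_apply, mul_one, mul_comm]
      exact mul_le_mul_of_nonneg_left (hF (empty_subset s)) (prod_nonneg fun i _ => hw₀ i)
    | succ k =>
      rw [cpSum_one_insert w k hi, cpSum_one_insert w (k + 1) hi, cpSum_insert w k hi,
        cpSum_insert w (k + 1) hi]
      exact efron_step (hw i).le (cpSum_one_nonneg hw₀ k E) (cpSum_one_pos hw (by omega))
        (cpSum_one_nonneg hw₀ _ E) (IH (hF.comp fun _ _ h => insert_subset_insert i h) k)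
        (IH hF (k + 1)) (cpSum_mono hw₀ fun s _ => hF (subset_insert i s))
        (cpSum_one_mul_le_sq hw E k)

lemma powersetCard_erase [DecidableEq ι] (k : ℕ) (E : Finset ι) (i : ι) :
    (E.erase i).powersetCard k = (E.powersetCard k).filter (fun s => i ∉ s) := by
  ext s
  simp only [mem_powersetCard, subset_erase, mem_filter]
  tauto

lemma sum_mul_cpSum_erase [DecidableEq ι] (w : ι → ℝ) (k : ℕ) (E : Finset ι)
    (F : Finset ι → ℝ) :
    ∑ i ∈ E, w i * cpSum w k (E.erase i) (fun t => F (insert i t)) =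
      (k + 1) * cpSum w (k + 1) E F := by
  have h : ∀ i ∈ E, w i * cpSum w k (E.erase i) (fun t => F (insert i t)) =
      ∑ s ∈ E.powersetCard (k + 1), if i ∈ s then (∏ j ∈ s, w j) * F s else 0 := by
    intro i hi
    rw [eq_sub_of_add_eq' (cpSum_eq_erase_add w k hi F).symm, cpSum, cpSum,
      powersetCard_erase, sum_filter, ← sum_sub_distrib]
    refine sum_congr rfl fun s _ => ?_
    split_ifs <;> simp
  rw [sum_congr rfl h, sum_comm, cpSum, mul_sum]
  refine sum_congr rfl fun s hs => ?_
  obtain ⟨hsE, hcard⟩ := mem_powersetCard.1 hs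
  rw [sum_ite_mem, inter_eq_right.2 hsE, sum_const, hcard, nsmul_eq_mul]
  push_cast
  ring

/-- `E[F | i ∈ S] - E[F | i ∉ S]` for samples `S` of size `k + 1` from `E`, multiplied by the
positive normalisations of both conditional laws. -/
noncomputable def condGap [DecidableEq ι] (w : ι → ℝ) (k : ℕ) (E : Finset ι) (F : Finset ι → ℝ)
    (i : ι) : ℝ :=
  cpSum w k (E.erase i) (fun t => F (insert i t)) * cpSum w (k + 1) (E.erase i) 1 -
    cpSum w (k + 1) (E.erase i) F * cpSum w k (E.erase i) 1

lemma sum_mul_condGap [DecidableEq ι] (w : ι → ℝ) (k : ℕ) (E : Finset ι) (F : Finset ι → ℝ) :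
    ∑ i ∈ E, w i * condGap w k E F i = 0 := by
  have h : ∀ i ∈ E, w i * condGap w k E F i =
      (w i * cpSum w k (E.erase i) (fun t => F (insert i t))) * cpSum w (k + 1) E 1 -
        (w i * cpSum w k (E.erase i) 1) * cpSum w (k + 1) E F := by
    intro i hi
    rw [condGap, cpSum_eq_erase_add w k hi F, cpSum_one_eq_erase_add w k hi]
    ring
  rw [sum_congr rfl h, sum_sub_distrib, ← sum_mul, ← sum_mul, sum_mul_cpSum_erase,
    show ∑ i ∈ E, w i * cpSum w k (E.erase i) 1 = (k + 1) * cpSum w (k + 1) E 1 from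
      sum_mul_cpSum_erase w k E 1]
  ring

lemma condGap_nonpos [DecidableEq ι] {w : ι → ℝ} (hw : ∀ i, 0 < w i) {F : Finset ι → ℝ}
    (hF : Monotone F) {i : ι} (hi : ∀ t, F (insert i t) = F t) (k : ℕ) (E : Finset ι) :
    condGap w k E F i ≤ 0 := by
  simp only [condGap, hi, sub_nonpos]
  exact cpSum_mul_cpSum_one_succ_le hw hF (E.erase i) k

lemma apply_insert_of_notMem [DecidableEq ι] {A : Finset ι} {F : Finset ι → ℝ}
    (hFA : ∀ s, F s = F (s ∩ A)) {i : ι} (hi : i ∉ A) (t : Finset ι) :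
    F (insert i t) = F t := by
  rw [hFA, insert_inter_of_notMem hi, ← hFA]

lemma apply_insert_inter [DecidableEq ι] {A : Finset ι} {F : Finset ι → ℝ}
    (hFA : ∀ s, F s = F (s ∩ A)) (i : ι) (s : Finset ι) :
    F (insert i s) = F (insert i (s ∩ A)) := by
  rw [hFA, hFA (insert i (s ∩ A))]
  congr 1
  ext j
  simp only [mem_inter, mem_insert]
  tauto

lemma exists_condGap_mul_nonpos [DecidableEq ι] {w : ι → ℝ} (hw : ∀ i, 0 < w i)
    {E : Finset ι} (hE : E.Nonempty) {A B : Finset ι} (hAB : Disjoint A B)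
    {F G : Finset ι → ℝ} (hF : Monotone F) (hG : Monotone G) (hFA : ∀ s, F s = F (s ∩ A))
    (hGB : ∀ s, G s = G (s ∩ B)) (k : ℕ) :
    ∃ i ∈ E, condGap w k E F i * condGap w k E G i ≤ 0 := by
  by_contra! h
  have hneg : ∀ i ∈ E, condGap w k E F i < 0 := by
    intro i hi
    by_cases hiA : i ∈ A
    · have := condGap_nonpos hw hG (apply_insert_of_notMem hGB (disjoint_left.1 hAB hiA)) k E
      nlinarith [h i hi]
    · refine (condGap_nonpos hw hF (apply_insert_of_notMem hFA hiA) k E).lt_of_ne fun h0 => ?_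
      simpa [h0] using h i hi
  have := sum_neg (fun i hi => mul_neg_of_pos_of_neg (hw i) (hneg i hi)) hE
  rw [sum_mul_condGap] at this
  exact lt_irrefl 0 this

lemma negAssoc_step {w AF AG AFG BF BG BFG Y₀ Y₁ : ℝ} (hw : 0 ≤ w) (hY₀ : 0 < Y₀) (hY₁ : 0 < Y₁)
    (hA : AFG * Y₀ ≤ AF * AG) (hB : BFG * Y₁ ≤ BF * BG)
    (hgap : (AF * Y₁ - BF * Y₀) * (AG * Y₁ - BG * Y₀) ≤ 0) :
    (BFG + w * AFG) * (Y₁ + w * Y₀) ≤ (BF + w * AF) * (BG + w * AG) := by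
  have hmid : BFG * Y₀ + AFG * Y₁ ≤ BF * AG + AF * BG := by
    refine le_of_mul_le_mul_right ?_ (mul_pos hY₀ hY₁)
    nlinarith [mul_le_mul_of_nonneg_right hA hY₁.le, mul_le_mul_of_nonneg_right hB hY₀.le]
  nlinarith [mul_le_mul_of_nonneg_left hmid hw, mul_le_mul_of_nonneg_left hA (mul_nonneg hw hw)]

theorem cpSum_mul_le [DecidableEq ι] {w : ι → ℝ} (hw : ∀ i, 0 < w i) {A B : Finset ι}
    (hAB : Disjoint A B) (E : Finset ι) (k : ℕ) {F G : Finset ι → ℝ} (hF : Monotone F)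
    (hG : Monotone G) (hFA : ∀ s, F s = F (s ∩ A)) (hGB : ∀ s, G s = G (s ∩ B)) :
    cpSum w k E (F * G) * cpSum w k E 1 ≤ cpSum w k E F * cpSum w k E G := by
  induction E using Finset.strongInduction generalizing k F G with
  | H E IH =>
    rcases lt_trichotomy E.card k with hk | rfl | hk
    · simp [cpSum_of_card_lt w _ hk]
    · simp only [cpSum_card, Pi.mul_apply, Pi.one_apply]
      exact le_of_eq (by ring)
    cases k with
    | zero => simp [cpSum_zero]
    | succ k =>
      obtain ⟨i, hi, hgap⟩ :=
        exists_condGap_mul_nonpos hw (card_pos.1 (by omega : 0 < E.card)) hAB hF hG hFA hGB k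
      have hcard : k + 1 ≤ (E.erase i).card := by rw [card_erase_of_mem hi]; omega
      rw [cpSum_one_eq_erase_add w k hi, cpSum_eq_erase_add w k hi (F * G),
        cpSum_eq_erase_add w k hi F, cpSum_eq_erase_add w k hi G]
      exact negAssoc_step (hw i).le (cpSum_one_pos hw (by omega)) (cpSum_one_pos hw hcard)
        (IH _ (erase_ssubset hi) k (hF.comp fun _ _ h => insert_subset_insert i h)
          (hG.comp fun _ _ h => insert_subset_insert i h) (apply_insert_inter hFA i)
          (apply_insert_inter hGB i))
        (IH _ (erase_ssubset hi) (k + 1) hF hG hFA hGB) hgap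

end ConditionalPoisson

lemma integral_comp_eq_sum {Ω α : Type*} [MeasurableSpace Ω] {μ : Measure Ω} [IsFiniteMeasure μ]
    [Fintype α] {S : Ω → α} (hS : ∀ a, MeasurableSet (S ⁻¹' {a})) (φ : α → ℝ) :
    ∫ ω, φ (S ω) ∂μ = ∑ a, φ a * μ.real (S ⁻¹' {a}) := by
  classical
  have h : (fun ω => φ (S ω)) = fun ω => ∑ a, (S ⁻¹' {a}).indicator (fun _ => φ a) ω := by
    ext ω
    rw [sum_eq_single (S ω) (fun a _ ha => Set.indicator_of_notMem (fun h => ha h.symm) _)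
      (by simp)]
    simp
  rw [h, integral_finsetSum _ fun a _ => (integrable_const _).indicator (hS a)]
  simp [integral_indicator_const _ (hS _), mul_comm]

lemma div_le_div_mul_div_of_mul_le {a b c d : ℝ} (hd : 0 ≤ d) (h : a * d ≤ b * c) :
    a / d ≤ b / d * (c / d) := by
  rcases hd.eq_or_lt with rfl | hd
  · simp
  rw [div_mul_div_comm, div_le_div_iff₀ hd (by positivity)]
  nlinarith

section Indicators

variable {ι : Type*} [DecidableEq ι]

def indicatorOn (A s : Finset ι) : A → ℝ := fun i => if (i : ι) ∈ s then 1 else 0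

lemma monotone_indicatorOn (A : Finset ι) : Monotone (indicatorOn A) := by
  intro s t hst i
  simp only [indicatorOn]
  split_ifs with hs ht <;> first | exact absurd (hst hs) ht | norm_num

lemma indicatorOn_inter (A s : Finset ι) : indicatorOn A (s ∩ A) = indicatorOn A s :=
  funext fun i => by simp [indicatorOn, i.2]

variable [Fintype ι] {Ω : Type*} {ε : Ω → ι → ℝ}

noncomputable def sampleSet (ε : Ω → ι → ℝ) (ω : Ω) : Finset ι :=
  univ.filter fun i => ε ω i = 1

lemma eq_ite_mem_sampleSet (hε : ∀ ω i, ε ω i = 0 ∨ ε ω i = 1) (ω : Ω) (i : ι) :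
    ε ω i = if i ∈ sampleSet ε ω then 1 else 0 := by
  rcases hε ω i with h | h <;> simp [sampleSet, h]

lemma indicatorOn_sampleSet (hε : ∀ ω i, ε ω i = 0 ∨ ε ω i = 1) (A : Finset ι) (ω : Ω) :
    (fun i : A => ε ω i) = indicatorOn A (sampleSet ε ω) :=
  funext fun i => eq_ite_mem_sampleSet hε ω i

lemma sampleSet_preimage (hε : ∀ ω i, ε ω i = 0 ∨ ε ω i = 1) (s : Finset ι) :
    sampleSet ε ⁻¹' {s} = {ω | ∀ i, ε ω i = if i ∈ s then 1 else 0} := by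
  ext ω
  simp only [Set.mem_preimage, Set.mem_singleton_iff, Set.mem_ofPred_eq]
  constructor
  · rintro rfl
    exact eq_ite_mem_sampleSet hε ω
  · intro h
    ext i
    simp [sampleSet, h i]

end Indicators

noncomputable def odds {ι : Type*} (p : ι → ℝ) (i : ι) : ℝ := p i / (1 - p i)

lemma odds_pos {ι : Type*} {p : ι → ℝ} (hp : ∀ i, 0 < p i ∧ p i < 1) (i : ι) : 0 < odds p i :=
  div_pos (hp i).1 (sub_pos.2 (hp i).2)

section Rejective

variable {N : ℕ} {p : Fin N → ℝ}

lemma rejWeight_nonneg (hp : ∀ i, 0 ≤ p i ∧ p i ≤ 1) (s : Finset (Fin N)) :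
    0 ≤ rejWeight p s :=
  mul_nonneg (prod_nonneg fun i _ => (hp i).1) (prod_nonneg fun i _ => sub_nonneg.2 (hp i).2)

lemma rejWeight_eq_mul_prod_odds (hp : ∀ i, p i ≠ 1) (s : Finset (Fin N)) :
    rejWeight p s = (∏ i, (1 - p i)) * ∏ i ∈ s, odds p i := by
  have hs : ∏ i ∈ s, (1 - p i) ≠ 0 := prod_ne_zero_iff.2 fun i _ => sub_ne_zero.2 (hp i).symm
  rw [rejWeight, ← prod_mul_prod_compl s (fun i => 1 - p i)]
  simp only [odds, prod_div_distrib]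
  field_simp

theorem IsRejective.integral_comp_sampleSet {Ω : Type*} [MeasurableSpace Ω] {μ : Measure Ω}
    [IsFiniteMeasure μ] {n : ℕ} {ε : Ω → Fin N → ℝ} (hrej : IsRejective μ n p ε)
    (hp : ∀ i, 0 < p i ∧ p i < 1) (φ : Finset (Fin N) → ℝ) :
    ∫ ω, φ (sampleSet ε ω) ∂μ = cpSum (odds p) n univ φ / cpSum (odds p) n univ 1 := by
  obtain ⟨hval, hmeas, hlaw⟩ := hrej
  set c := ∏ i, (1 - p i)
  have hc : 0 < c := prod_pos fun i _ => sub_pos.2 (hp i).2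
  have hweight : ∀ ψ : Finset (Fin N) → ℝ,
      ∑ u ∈ univ.filter (fun u : Finset (Fin N) => u.card = n), rejWeight p u * ψ u =
        c * cpSum (odds p) n univ ψ := by
    intro ψ
    rw [cpSum, mul_sum]
    refine sum_congr (by ext; simp) fun s _ => ?_
    rw [rejWeight_eq_mul_prod_odds fun i => (hp i).2.ne]
    ring
  have hfiber : ∀ s, MeasurableSet (sampleSet ε ⁻¹' {s}) := by
    intro s
    rw [sampleSet_preimage hval, Set.ofPred_forall]
    exact MeasurableSet.iInter fun i => hmeas i (measurableSet_singleton _)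
  have hmass : ∀ s, μ.real (sampleSet ε ⁻¹' {s}) =
      if s.card = n then rejWeight p s / (c * cpSum (odds p) n univ 1) else 0 := by
    intro s
    have hnorm := hweight 1
    simp only [Pi.one_apply, mul_one] at hnorm
    rw [measureReal_def, sampleSet_preimage hval, hlaw, hnorm]
    split_ifs
    · exact ENNReal.toReal_ofReal <| div_nonneg
        (rejWeight_nonneg (fun i => ⟨(hp i).1.le, (hp i).2.le⟩) s)
        (mul_nonneg hc.le (cpSum_one_nonneg (fun i => (odds_pos hp i).le) n univ))
    · rfl
  rw [integral_comp_eq_sum hfiber, ← mul_div_mul_left _ _ hc.ne', ← hweight, sum_div, sum_filter]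
  refine sum_congr rfl fun s _ => ?_
  rw [hmass]
  split_ifs <;> ring

end Rejective

theorem rejective_negAssoc_general
    {Ω : Type*} [MeasurableSpace Ω] (μ : Measure Ω) [IsProbabilityMeasure μ]
    {N : ℕ} (n : ℕ)
    (p : Fin N → ℝ) (hp : ∀ i, 0 < p i ∧ p i < 1)
    (ε : Ω → Fin N → ℝ) (hrej : IsRejective μ n p ε) :
    NegAssoc μ (fun i ω => ε ω i) := by
  intro A₁ A₂ hA f g _ _ _ _ hf hg
  simp only [indicatorOn_sampleSet hrej.1]
  have key := cpSum_mul_le (odds_pos hp) hA univ n (hf.comp (monotone_indicatorOn A₁))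
    (hg.comp (monotone_indicatorOn A₂)) (fun s => congrArg f (indicatorOn_inter A₁ s).symm)
    (fun s => congrArg g (indicatorOn_inter A₂ s).symm)
  rw [hrej.integral_comp_sampleSet hp (fun s => f (indicatorOn A₁ s) * g (indicatorOn A₂ s)),
    hrej.integral_comp_sampleSet hp (fun s => f (indicatorOn A₁ s)),
    hrej.integral_comp_sampleSet hp (fun s => g (indicatorOn A₂ s))]
  exact div_le_div_mul_div_of_mul_le (cpSum_one_nonneg (fun i => (odds_pos hp i).le) n univ) key

/-- The indicator variables of a rejective sampling scheme are negatively associated. -/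
theorem rejective_negAssoc
    {Ω : Type*} [MeasurableSpace Ω] (μ : Measure Ω) [IsProbabilityMeasure μ]
    {N : ℕ} (n : ℕ) (hn1 : 1 ≤ n) (hnN : n ≤ N)
    (p : Fin N → ℝ) (hp : ∀ i, 0 < p i ∧ p i < 1) (hsum : ∑ i, p i = (n : ℝ))
    (ε : Ω → Fin N → ℝ) (hrej : IsRejective μ n p ε) :
    NegAssoc μ (fun i ω => ε ω i) :=
  rejective_negAssoc_general μ n p hp ε hrej
end

section
/- There exist universal constants C₁ > 0 and D with the following property: for every N ≥ 1, every integer n with 0 ≤ n ≤ N, and every collection of independent Bernoulli random variables ε_1,…,ε_N with means p_1,…,p_N ∈ (0,1) satisfying Σ_{i=1}^N p_i = n, if d_N = Σ_{i=1}^N p_i(1−p_i) ≥ D, then P{ Σ_{i=1}^N ε_i = n } ≥ C₁ / √(d_N). -/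
/-!
Let `S = ∑ i, ε i` and `b k = P (S = k)`. Adding one Bernoulli summand replaces `b`
by `(1 - q) b k + q b (k - 1)`, which preserves log-concavity, so `b` is log-concave and hence
monotone on one side of the mean `n`. The central moments are `E (S - n) ^ 2 = d` and
`E (S - n) ^ 4 ≤ 3 d ^ 2 + d`, so Hölder gives `E |S - n| ≥ √d / 2`, and since `E (S - n) = 0`
each one-sided deviation is at least `√d / 4`. On the monotone side, the deviation within
distance `T ≈ 8 √d` of `n` contributes at most `T ^ 2 b n`, the rest at most `d / T ≤ √d / 8`;
hence `b n ≥ 1 / (648 √d)`.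
-/

open MeasureTheory ProbabilityTheory Real Finset

def IsLogConcaveSeq (a : ℕ → ℝ) : Prop :=
  ∀ k, a (k + 2) * a k ≤ a (k + 1) ^ 2

lemma mix_mul_le_sq {q x₀ x₁ x₂ x₃ : ℝ} (hq₀ : 0 ≤ q) (hq₁ : q ≤ 1)
    (h₁ : x₃ * x₁ ≤ x₂ ^ 2) (h₂ : x₂ * x₀ ≤ x₁ ^ 2) (h₃ : x₃ * x₀ ≤ x₂ * x₁) :
    ((1 - q) * x₃ + q * x₂) * ((1 - q) * x₁ + q * x₀) ≤ ((1 - q) * x₂ + q * x₁) ^ 2 := by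
  nlinarith [mul_le_mul_of_nonneg_left h₁ (sq_nonneg (1 - q)),
    mul_le_mul_of_nonneg_left h₂ (sq_nonneg q),
    mul_le_mul_of_nonneg_left h₃ (mul_nonneg hq₀ (sub_nonneg.2 hq₁))]

lemma mul_le_mul_of_le_sq_of_le_sq {x₀ x₁ x₂ x₃ : ℝ} (h₀ : 0 ≤ x₀)
    (hx₁ : 0 < x₁) (hx₂ : 0 < x₂) (h₁ : x₃ * x₁ ≤ x₂ ^ 2) (h₂ : x₂ * x₀ ≤ x₁ ^ 2) :
    x₃ * x₀ ≤ x₂ * x₁ := by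
  have h := mul_le_mul h₁ h₂ (mul_nonneg hx₂.le h₀) (sq_nonneg _)
  refine le_of_mul_le_mul_right ?_ (mul_pos hx₁ hx₂)
  nlinarith [h]

lemma IsLogConcaveSeq.unimodal {a : ℕ → ℝ} (hlc : IsLogConcaveSeq a) {M n : ℕ} (hn : n ≤ M)
    (hpos : ∀ k ≤ M, 0 < a k) :
    (∀ k, n ≤ k → k ≤ M → a k ≤ a n) ∨ ∀ k ≤ n, a k ≤ a n := by
  rcases le_total (a (n + 1)) (a n) with hdec | hinc
  · left
    have step : ∀ k, n ≤ k → k + 1 ≤ M → a (k + 1) ≤ a k := by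
      intro k hk
      induction k, hk using Nat.le_induction with
      | base => exact fun _ => hdec
      | succ k hnk ih =>
        intro hkM
        nlinarith [hlc k, hpos k (by omega),
          mul_le_mul_of_nonneg_left (ih (by omega)) (hpos (k + 1) (by omega)).le]
    intro k hk hkM
    induction k, hk using Nat.le_induction with
    | base => exact le_rfl
    | succ k hnk ih => exact (step k hnk hkM).trans (ih (by omega))
  · right
    have step : ∀ k ≤ n, a k ≤ a (k + 1) := by
      intro k hk
      induction hk using Nat.decreasingInduction with
      | self => exact hinc
      | of_succ k hkn ih =>
        nlinarith [hlc k, hpos (k + 1) (by omega),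
          mul_le_mul_of_nonneg_right ih (hpos k (by omega)).le]
    intro k hk
    induction hk using Nat.decreasingInduction with
    | self => exact le_rfl
    | of_succ k hkn ih => exact (step k hkn.le).trans ih

section PoissonBinomial

variable {ι : Type*} [DecidableEq ι] (p : ι → ℝ)

noncomputable def poissonBinomial (s : Finset ι) (k : ℕ) : ℝ :=
  ∑ T ∈ s.powersetCard k, ∏ i ∈ s, if i ∈ T then p i else 1 - p i

variable {p}

lemma poissonBinomial_of_card_lt {s : Finset ι} {k : ℕ} (h : s.card < k) :
    poissonBinomial p s k = 0 := by
  simp [poissonBinomial, powersetCard_eq_empty.2 h]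

lemma poissonBinomial_nonneg {s : Finset ι} (hp : ∀ i ∈ s, 0 ≤ p i ∧ p i ≤ 1) (k : ℕ) :
    0 ≤ poissonBinomial p s k :=
  sum_nonneg fun _ _ => prod_nonneg fun i hi => by split_ifs <;> linarith [hp i hi]

lemma poissonBinomial_pos {s : Finset ι} (hp : ∀ i ∈ s, 0 < p i ∧ p i < 1) {k : ℕ}
    (hk : k ≤ s.card) : 0 < poissonBinomial p s k :=
  sum_pos (fun _ _ => prod_pos fun i hi => by split_ifs <;> linarith [hp i hi])
    (powersetCard_nonempty.2 hk)

lemma poissonBinomial_insert_zero {s : Finset ι} {j : ι} (hj : j ∉ s) :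
    poissonBinomial p (insert j s) 0 = (1 - p j) * poissonBinomial p s 0 := by
  simp [poissonBinomial, prod_insert hj]

lemma poissonBinomial_insert_succ {s : Finset ι} {j : ι} (hj : j ∉ s) (k : ℕ) :
    poissonBinomial p (insert j s) (k + 1) =
      (1 - p j) * poissonBinomial p s (k + 1) + p j * poissonBinomial p s k := by
  have hjT : ∀ {m}, ∀ T ∈ s.powersetCard m, j ∉ T := fun T hT h =>
    hj ((mem_powersetCard.1 hT).1 h)
  have hinj : Set.InjOn (insert j) (s.powersetCard k : Set (Finset ι)) := fun T hT T' hT' h => by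
    simpa [erase_insert (hjT T hT), erase_insert (hjT T' hT')] using congrArg (erase · j) h
  have hdisj : Disjoint (s.powersetCard (k + 1)) ((s.powersetCard k).image (insert j)) := by
    simp only [disjoint_left, mem_image, not_exists, not_and]
    intro T hT T' _ h
    exact hj ((mem_powersetCard.1 hT).1 (h ▸ mem_insert_self j T'))
  rw [poissonBinomial, powersetCard_succ_insert hj, sum_union hdisj, sum_image hinj,
    poissonBinomial, poissonBinomial, mul_sum, mul_sum]
  congr 1 <;> refine sum_congr rfl fun T hT => ?_ <;> rw [prod_insert hj]
  · rw [if_neg (hjT T hT)]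
  · rw [if_pos (mem_insert_self j T)]
    congr 1
    refine prod_congr rfl fun i hi => ?_
    simp only [mem_insert, ne_of_mem_of_not_mem hi hj, false_or]

lemma sum_mul_poissonBinomial_insert {s : Finset ι} {j : ι} (hj : j ∉ s) (g : ℕ → ℝ) :
    ∑ k ∈ range ((insert j s).card + 1), g k * poissonBinomial p (insert j s) k =
      ∑ k ∈ range (s.card + 1), ((1 - p j) * g k + p j * g (k + 1)) * poissonBinomial p s k := by
  rw [card_insert_of_notMem hj, sum_range_succ', poissonBinomial_insert_zero hj]
  simp only [poissonBinomial_insert_succ hj, add_mul, mul_add, sum_add_distrib]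
  rw [sum_range_succ (fun k => g (k + 1) * ((1 - p j) * poissonBinomial p s (k + 1))),
    poissonBinomial_of_card_lt (Nat.lt_succ_self _),
    sum_range_succ' (fun k => (1 - p j) * g k * poissonBinomial p s k)]
  simp only [mul_zero, add_zero]
  rw [add_right_comm]
  congr 1
  · congr 1
    · exact sum_congr rfl fun _ _ => by ring
    · ring
  · exact sum_congr rfl fun _ _ => by ring

variable (p) in
lemma sum_poissonBinomial (s : Finset ι) :
    ∑ k ∈ range (s.card + 1), poissonBinomial p s k = 1 := by
  induction s using Finset.induction_on with
  | empty => simp [poissonBinomial]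
  | insert j s hj ih =>
    simpa [ih] using sum_mul_poissonBinomial_insert (p := p) hj (fun _ => 1)

variable (p) in
lemma sum_sub_mul_poissonBinomial (s : Finset ι) :
    ∑ k ∈ range (s.card + 1), ((k : ℝ) - ∑ i ∈ s, p i) * poissonBinomial p s k = 0 := by
  induction s using Finset.induction_on with
  | empty => simp [poissonBinomial]
  | insert j s hj ih =>
    rw [sum_insert hj, sum_mul_poissonBinomial_insert hj]
    refine (sum_congr rfl fun k _ => ?_).trans ih
    push_cast
    ring

variable (p) in
lemma sum_sub_sq_mul_poissonBinomial (s : Finset ι) :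
    ∑ k ∈ range (s.card + 1), ((k : ℝ) - ∑ i ∈ s, p i) ^ 2 * poissonBinomial p s k =
      ∑ i ∈ s, p i * (1 - p i) := by
  induction s using Finset.induction_on with
  | empty => simp [poissonBinomial]
  | insert j s hj ih =>
    rw [sum_insert hj, sum_insert hj, sum_mul_poissonBinomial_insert hj]
    have h : ∀ k ∈ range (s.card + 1),
        ((1 - p j) * ((k : ℝ) - (p j + ∑ i ∈ s, p i)) ^ 2 +
            p j * (((k + 1 : ℕ) : ℝ) - (p j + ∑ i ∈ s, p i)) ^ 2) * poissonBinomial p s k =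
          ((k : ℝ) - ∑ i ∈ s, p i) ^ 2 * poissonBinomial p s k +
            p j * (1 - p j) * poissonBinomial p s k := fun k _ => by
      push_cast
      ring
    rw [sum_congr rfl h, sum_add_distrib, ih, ← mul_sum, sum_poissonBinomial]
    ring

variable (p) in
lemma sum_sub_pow_four_mul_poissonBinomial_le (s : Finset ι) :
    ∑ k ∈ range (s.card + 1), ((k : ℝ) - ∑ i ∈ s, p i) ^ 4 * poissonBinomial p s k ≤
      3 * (∑ i ∈ s, p i * (1 - p i)) ^ 2 + ∑ i ∈ s, p i * (1 - p i) := by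
  induction s using Finset.induction_on with
  | empty => simp [poissonBinomial]
  | insert j s hj ih =>
    rw [sum_insert hj, sum_insert hj, sum_mul_poissonBinomial_insert hj]
    set v := p j * (1 - p j)
    have h : ∀ k ∈ range (s.card + 1),
        ((1 - p j) * ((k : ℝ) - (p j + ∑ i ∈ s, p i)) ^ 4 +
            p j * (((k + 1 : ℕ) : ℝ) - (p j + ∑ i ∈ s, p i)) ^ 4) * poissonBinomial p s k =
          ((k : ℝ) - ∑ i ∈ s, p i) ^ 4 * poissonBinomial p s k +
            6 * v * (((k : ℝ) - ∑ i ∈ s, p i) ^ 2 * poissonBinomial p s k) +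
            4 * v * (1 - 2 * p j) * (((k : ℝ) - ∑ i ∈ s, p i) * poissonBinomial p s k) +
            v * (1 - 3 * v) * poissonBinomial p s k := fun k _ => by
      push_cast
      ring
    simp only [sum_congr rfl h, sum_add_distrib, ← mul_sum, sum_poissonBinomial,
      sum_sub_mul_poissonBinomial, sum_sub_sq_mul_poissonBinomial]
    nlinarith [sq_nonneg v]

lemma isLogConcaveSeq_poissonBinomial {s : Finset ι} (hp : ∀ i ∈ s, 0 < p i ∧ p i < 1) :
    IsLogConcaveSeq (poissonBinomial p s) := by
  intro k
  induction s using Finset.induction_on generalizing k with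
  | empty => rw [poissonBinomial_of_card_lt (by simp), zero_mul]; positivity
  | insert j s hj ih =>
    have hps : ∀ i ∈ s, 0 < p i ∧ p i < 1 := fun i hi => hp i (mem_insert_of_mem hi)
    have hq := hp j (mem_insert_self j s)
    have hlc := ih hps
    have hb := poissonBinomial_nonneg fun i hi => ⟨(hps i hi).1.le, (hps i hi).2.le⟩
    have hcross : ∀ m, poissonBinomial p s (m + 3) * poissonBinomial p s m ≤
        poissonBinomial p s (m + 2) * poissonBinomial p s (m + 1) := fun m => by
      rcases le_or_gt (m + 2) s.card with h | h
      · exact mul_le_mul_of_le_sq_of_le_sq (hb _) (poissonBinomial_pos hps (by omega))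
          (poissonBinomial_pos hps h) (hlc (m + 1)) (hlc m)
      · rw [poissonBinomial_of_card_lt (by omega), zero_mul]
        exact mul_nonneg (hb _) (hb _)
    cases k with
    | zero =>
      rw [poissonBinomial_insert_zero hj, poissonBinomial_insert_succ hj,
        poissonBinomial_insert_succ hj]
      simpa using mix_mul_le_sq (x₀ := 0) hq.1.le hq.2.le (hlc 0) (by simpa using sq_nonneg _)
        (by simpa using mul_nonneg (hb 1) (hb 0))
    | succ m =>
      rw [poissonBinomial_insert_succ hj, poissonBinomial_insert_succ hj,
        poissonBinomial_insert_succ hj]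
      exact mix_mul_le_sq hq.1.le hq.2.le (hlc (m + 1)) (hlc m) (hcross m)

end PoissonBinomial

lemma measure_sum_eq_poissonBinomial {Ω ι : Type*} [MeasurableSpace Ω] {μ : Measure Ω}
    [IsProbabilityMeasure μ] [Fintype ι] [DecidableEq ι] {p : ι → ℝ} {ε : Ω → ι → ℝ}
    (hp : ∀ i, 0 ≤ p i ∧ p i ≤ 1) (hmeas : ∀ i, Measurable fun ω => ε ω i)
    (h01 : ∀ ω i, ε ω i = 0 ∨ ε ω i = 1) (hindep : iIndepFun (fun i ω => ε ω i) μ)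
    (hmarg : ∀ i, μ {ω | ε ω i = 1} = ENNReal.ofReal (p i)) (k : ℕ) :
    μ {ω | ∑ i, ε ω i = k} = ENNReal.ofReal (poissonBinomial p univ k) := by
  set successes : Ω → Finset ι := fun ω => univ.filter fun i => ε ω i = 1
  let event (T : Finset ι) (i : ι) : Set ℝ := if i ∈ T then {1} else {1}ᶜ
  have hevent : ∀ T i, MeasurableSet (event T i) := fun T i => by
    simp only [event]; split_ifs <;> simp
  have hset : {ω | ∑ i, ε ω i = k} = successes ⁻¹' ↑(powersetCard k (univ : Finset ι)) := by
    have hsum : ∀ ω, ∑ i, ε ω i = (successes ω).card := fun ω => by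
      rw [card_filter, Nat.cast_sum]
      refine sum_congr rfl fun i _ => ?_
      rcases h01 ω i with h | h <;> simp [h]
    ext ω
    simp [hsum]
  have hfiber : ∀ T, successes ⁻¹' {T} = ⋂ i ∈ univ, (fun ω => ε ω i) ⁻¹' event T i := fun T => by
    ext ω
    simp only [Set.mem_preimage, Set.mem_singleton_iff, Set.mem_iInter, Finset.ext_iff,
      successes, event, mem_filter, mem_univ, true_and]
    refine forall_congr' fun i => ?_
    split_ifs with h <;> simp [h]
  have hfactor : ∀ T i, μ ((fun ω => ε ω i) ⁻¹' event T i) =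
      ENNReal.ofReal (if i ∈ T then p i else 1 - p i) := fun T i => by
    simp only [event]
    split_ifs
    · exact hmarg i
    · rw [Set.preimage_compl, prob_compl_eq_one_sub (hmeas i (measurableSet_singleton 1)),
        ENNReal.ofReal_sub _ (hp i).1, ENNReal.ofReal_one]
      exact congrArg _ (hmarg i)
  have hfactor_nonneg : ∀ (T : Finset ι) i, 0 ≤ if i ∈ T then p i else 1 - p i := fun T i => by
    split_ifs <;> linarith [hp i]
  rw [hset, ← sum_measure_preimage_singleton _ fun T _ =>
      hfiber T ▸ Finset.measurableSet_biInter _ fun i _ => hmeas i (hevent T i),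
    poissonBinomial, ENNReal.ofReal_sum_of_nonneg fun T _ => prod_nonneg fun i _ =>
      hfactor_nonneg T i]
  refine sum_congr rfl fun T _ => ?_
  rw [hfiber, hindep.measure_inter_preimage_eq_mul _ fun i _ => hevent T i,
    ENNReal.ofReal_prod_of_nonneg fun i _ => hfactor_nonneg T i]
  exact prod_congr rfl fun i _ => hfactor T i

lemma sum_sq_mul_pow_three_le {ι : Type*} (s : Finset ι) (x w : ι → ℝ)
    (hw : ∀ i ∈ s, 0 ≤ w i) :
    (∑ i ∈ s, x i ^ 2 * w i) ^ 3 ≤ (∑ i ∈ s, |x i| * w i) ^ 2 * ∑ i ∈ s, x i ^ 4 * w i := by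
  set A := ∑ i ∈ s, |x i| * w i
  set B := ∑ i ∈ s, x i ^ 2 * w i
  set C := ∑ i ∈ s, |x i| ^ 3 * w i
  set D := ∑ i ∈ s, x i ^ 4 * w i
  have hA : 0 ≤ A := sum_nonneg fun i hi => mul_nonneg (abs_nonneg _) (hw i hi)
  have hB : 0 ≤ B := sum_nonneg fun i hi => mul_nonneg (sq_nonneg _) (hw i hi)
  have hD : 0 ≤ D := sum_nonneg fun i hi => mul_nonneg (by positivity) (hw i hi)
  have hAC : B ^ 2 ≤ A * C :=
    sum_sq_le_sum_mul_sum_of_sq_le_mul s (fun i hi => mul_nonneg (abs_nonneg _) (hw i hi))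
      (fun i hi => mul_nonneg (by positivity) (hw i hi))
      fun i _ => le_of_eq (by rw [← sq_abs (x i)]; ring)
  have hBD : C ^ 2 ≤ B * D :=
    sum_sq_le_sum_mul_sum_of_sq_le_mul s (fun i hi => mul_nonneg (sq_nonneg _) (hw i hi))
      (fun i hi => mul_nonneg (by positivity) (hw i hi))
      fun i _ => le_of_eq (by rw [← sq_abs (x i), ← (by decide : Even 4).pow_abs (x i)]; ring)
  rcases hB.eq_or_lt with hB0 | hB0
  · rw [← hB0, zero_pow three_ne_zero]
    positivity
  · have : B ^ 4 ≤ A ^ 2 * (B * D) := calc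
      B ^ 4 = (B ^ 2) ^ 2 := by ring
      _ ≤ (A * C) ^ 2 := pow_le_pow_left₀ (sq_nonneg B) hAC 2
      _ = A ^ 2 * C ^ 2 := by ring
      _ ≤ A ^ 2 * (B * D) := mul_le_mul_of_nonneg_left hBD (sq_nonneg A)
    nlinarith

lemma sqrt_div_two_le_sum_abs_mul {ι : Type*} (s : Finset ι) (x w : ι → ℝ)
    (hw : ∀ i ∈ s, 0 ≤ w i) {d : ℝ} (hd : 0 < d) (h₂ : ∑ i ∈ s, x i ^ 2 * w i = d)
    (h₄ : ∑ i ∈ s, x i ^ 4 * w i ≤ 4 * d ^ 2) :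
    √d / 2 ≤ ∑ i ∈ s, |x i| * w i := by
  have hA : 0 ≤ ∑ i ∈ s, |x i| * w i := sum_nonneg fun i hi => mul_nonneg (abs_nonneg _) (hw i hi)
  have h := sum_sq_mul_pow_three_le s x w hw
  rw [h₂] at h
  have : d ^ 3 ≤ (∑ i ∈ s, |x i| * w i) ^ 2 * (4 * d ^ 2) :=
    h.trans (mul_le_mul_of_nonneg_left h₄ (sq_nonneg _))
  rw [div_le_iff₀ two_pos, sqrt_le_iff]
  constructor
  · positivity
  · nlinarith [pow_pos hd 2]

lemma sum_natCast_mul_le_sq_mul_add_div (s : Finset ℕ) (g : ℕ → ℕ) (hg : Set.InjOn g {k | 0 < g k})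
    (a : ℕ → ℝ) (ha : ∀ k ∈ s, 0 ≤ a k) {T : ℕ} (hT : 0 < T) {A : ℝ} (hA₀ : 0 ≤ A)
    (hA : ∀ k ∈ s, 0 < g k → g k ≤ T → a k ≤ A) :
    ∑ k ∈ s, (g k : ℝ) * a k ≤ T ^ 2 * A + (∑ k ∈ s, (g k : ℝ) ^ 2 * a k) / T := by
  have hTR : (0 : ℝ) < T := by exact_mod_cast hT
  set F := s.filter fun k => 0 < g k ∧ g k ≤ T
  have hF : F.card ≤ T := by
    refine (card_le_card_of_injOn g (t := Icc 1 T) (fun k hk => mem_Icc.2 (mem_filter.1 hk).2)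
      (hg.mono fun k hk => (mem_filter.1 hk).2.1)).trans (by simp)
  have hpt : ∀ k ∈ s, (g k : ℝ) * a k ≤
      T * (if 0 < g k ∧ g k ≤ T then A else 0) + (g k : ℝ) ^ 2 * a k / T := by
    intro k hk
    have hak := ha k hk
    split_ifs with h
    · have : (g k : ℝ) ≤ T := by exact_mod_cast h.2
      have := hA k hk h.1 h.2
      have : 0 ≤ (g k : ℝ) ^ 2 * a k / T := by positivity
      nlinarith
    · rcases Nat.eq_zero_or_pos (g k) with h0 | h0
      · simp [h0]
      · have hTg : (T : ℝ) ≤ g k := by exact_mod_cast (lt_of_not_ge (not_and.1 h h0)).le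
        rw [mul_zero, zero_add, le_div_iff₀ hTR]
        nlinarith [mul_le_mul_of_nonneg_left hTg (mul_nonneg (Nat.cast_nonneg (g k)) hak)]
  calc ∑ k ∈ s, (g k : ℝ) * a k
      ≤ ∑ k ∈ s, (T * (if 0 < g k ∧ g k ≤ T then A else 0) + (g k : ℝ) ^ 2 * a k / T) :=
        sum_le_sum hpt
    _ = T * (F.card * A) + (∑ k ∈ s, (g k : ℝ) ^ 2 * a k) / T := by
        rw [sum_add_distrib, ← mul_sum, ← sum_filter, sum_const, nsmul_eq_mul, sum_div]
    _ ≤ T ^ 2 * A + (∑ k ∈ s, (g k : ℝ) ^ 2 * a k) / T := by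
        have : (F.card : ℝ) ≤ T := by exact_mod_cast hF
        nlinarith [mul_le_mul_of_nonneg_right this hA₀]

lemma natCast_tsub_sub_natCast_tsub (k n : ℕ) : ((k - n : ℕ) : ℝ) - (n - k : ℕ) = k - n := by
  rcases le_total k n with h | h <;> simp [Nat.sub_eq_zero_of_le, Nat.cast_sub, h]

lemma natCast_tsub_add_natCast_tsub (k n : ℕ) :
    ((k - n : ℕ) : ℝ) + (n - k : ℕ) = |(k : ℝ) - n| := by
  rcases le_total k n with h | h
  · rw [Nat.sub_eq_zero_of_le h, Nat.cast_sub h, abs_of_nonpos (by simpa using h)]; simp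
  · rw [Nat.sub_eq_zero_of_le h, Nat.cast_sub h, abs_of_nonneg (by simpa using h)]; simp

lemma natCast_tsub_sq_le (k n : ℕ) : ((k - n : ℕ) : ℝ) ^ 2 ≤ ((k : ℝ) - n) ^ 2 := by
  rcases le_total k n with h | h
  · simp [Nat.sub_eq_zero_of_le h, sq_nonneg]
  · rw [Nat.cast_sub h]

-- `((k - n : ℕ) : ℝ)` and `((n - k : ℕ) : ℝ)` are the positive and negative parts of `k - n`.
lemma sqrt_div_four_le_sum_tsub_mul (s : Finset ℕ) (n : ℕ) {a : ℕ → ℝ} (ha : ∀ k ∈ s, 0 ≤ a k)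
    {d : ℝ} (hd : 1 ≤ d) (hmean : ∑ k ∈ s, ((k : ℝ) - n) * a k = 0)
    (hvar : ∑ k ∈ s, ((k : ℝ) - n) ^ 2 * a k = d)
    (hm4 : ∑ k ∈ s, ((k : ℝ) - n) ^ 4 * a k ≤ 3 * d ^ 2 + d) :
    √d / 4 ≤ ∑ k ∈ s, ((k - n : ℕ) : ℝ) * a k ∧ √d / 4 ≤ ∑ k ∈ s, ((n - k : ℕ) : ℝ) * a k := by
  have habs : √d / 2 ≤ ∑ k ∈ s, |(k : ℝ) - n| * a k :=
    sqrt_div_two_le_sum_abs_mul s _ a ha (by linarith) hvar (by nlinarith)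
  have hdiff : ∑ k ∈ s, ((k - n : ℕ) : ℝ) * a k - ∑ k ∈ s, ((n - k : ℕ) : ℝ) * a k = 0 := by
    simp only [← sum_sub_distrib, ← sub_mul, natCast_tsub_sub_natCast_tsub, hmean]
  have hadd : ∑ k ∈ s, ((k - n : ℕ) : ℝ) * a k + ∑ k ∈ s, ((n - k : ℕ) : ℝ) * a k =
      ∑ k ∈ s, |(k : ℝ) - n| * a k := by
    simp only [← sum_add_distrib, ← add_mul, natCast_tsub_add_natCast_tsub]
  constructor <;> linarith

lemma IsLogConcaveSeq.le_apply_of_moments {a : ℕ → ℝ} (hlc : IsLogConcaveSeq a) {M n : ℕ}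
    (hn : n ≤ M) (hpos : ∀ k ≤ M, 0 < a k) {d : ℝ} (hd : 1 ≤ d)
    (hmean : ∑ k ∈ range (M + 1), ((k : ℝ) - n) * a k = 0)
    (hvar : ∑ k ∈ range (M + 1), ((k : ℝ) - n) ^ 2 * a k = d)
    (hm4 : ∑ k ∈ range (M + 1), ((k : ℝ) - n) ^ 4 * a k ≤ 3 * d ^ 2 + d) :
    1 / 648 / √d ≤ a n := by
  have hM : ∀ k ∈ range (M + 1), k ≤ M := fun k hk => Nat.lt_succ_iff.1 (mem_range.1 hk)
  have ha : ∀ k ∈ range (M + 1), 0 ≤ a k := fun k hk => (hpos k (hM k hk)).le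
  obtain ⟨hright, hleft⟩ := sqrt_div_four_le_sum_tsub_mul _ n ha hd hmean hvar hm4
  set s := √d
  have hs1 : 1 ≤ s := one_le_sqrt.2 hd
  have hsd : s ^ 2 = d := sq_sqrt (by linarith)
  set T := ⌈8 * s⌉₊
  have hT8 : 8 * s ≤ T := Nat.le_ceil _
  have hT9 : (T : ℝ) ≤ 9 * s := (Nat.ceil_lt_add_one (by positivity)).le.trans (by linarith)
  have hT : 0 < T := (Nat.cast_pos (α := ℝ)).1 (by linarith)
  have hside : ∀ g : ℕ → ℕ, Set.InjOn g {k | 0 < g k} → (∀ k ≤ M, 0 < g k → a k ≤ a n) →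
      (∀ k, ((g k : ℕ) : ℝ) ^ 2 ≤ ((k : ℝ) - n) ^ 2) →
      s / 4 ≤ ∑ k ∈ range (M + 1), (g k : ℝ) * a k → s / 4 ≤ T ^ 2 * a n + d / T := by
    intro g hg hmono hsq hlow
    refine hlow.trans ((sum_natCast_mul_le_sq_mul_add_div _ g hg a ha hT (hpos n hn).le
      fun k hk h0 _ => hmono k (hM k hk) h0).trans ?_)
    rw [← hvar]
    gcongr _ + ?_ / _
    exact sum_le_sum fun k hk => mul_le_mul_of_nonneg_right (hsq k) (ha k hk)
  have hbound : s / 4 ≤ T ^ 2 * a n + d / T := by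
    rcases hlc.unimodal hn hpos with hdec | hinc
    · exact hside (· - n)
        (fun k (_ : 0 < k - n) k' (_ : 0 < k' - n) (_ : k - n = k' - n) => by omega)
        (fun k hkM hk => hdec k (by omega) hkM) (natCast_tsub_sq_le · n) hright
    · exact hside (n - ·)
        (fun k (_ : 0 < n - k) k' (_ : 0 < n - k') (_ : n - k = n - k') => by omega)
        (fun k _ hk => hinc k (by omega)) (fun k => (natCast_tsub_sq_le n k).trans_eq (by ring))
        hleft
  have hdT : d / T ≤ s / 8 := by
    rw [div_le_iff₀ (by linarith), ← hsd]
    nlinarith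
  rw [div_div, div_le_iff₀ (by positivity)]
  nlinarith [hpos n hn,
    mul_le_mul_of_nonneg_right (pow_le_pow_left₀ (by positivity) hT9 2) (hpos n hn).le]

/-- Universal lower bound for the probability that a Poisson sample size hits its mean. -/
theorem poisson_size_atom_lower_bound :
    ∃ C₁ D : ℝ, 0 < C₁ ∧
      ∀ (Ω : Type) (_ : MeasurableSpace Ω) (μ : Measure Ω) (_ : IsProbabilityMeasure μ)
        (N : ℕ), 1 ≤ N → ∀ n : ℕ, n ≤ N →
        ∀ (p : Fin N → ℝ) (ε : Ω → Fin N → ℝ),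
          (∀ i, 0 < p i ∧ p i < 1) → (∑ i, p i = (n : ℝ)) →
          (∀ i, Measurable fun ω => ε ω i) →
          (∀ ω i, ε ω i = 0 ∨ ε ω i = 1) →
          iIndepFun (fun i ω => ε ω i) μ →
          (∀ i, μ {ω | ε ω i = 1} = ENNReal.ofReal (p i)) →
          ∀ dN : ℝ, dN = ∑ i, p i * (1 - p i) → D ≤ dN →
            ENNReal.ofReal (C₁ / Real.sqrt dN) ≤ μ {ω | ∑ i, ε ω i = (n : ℝ)} := by
  refine ⟨1 / 648, 1, by norm_num, ?_⟩
  intro Ω _ μ _ N _ n hnN p ε hp hsum hmeas h01 hindep hmarg dN hdN hD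
  have hp' : ∀ i ∈ (univ : Finset (Fin N)), 0 < p i ∧ p i < 1 := fun i _ => hp i
  rw [measure_sum_eq_poissonBinomial (fun i => ⟨(hp i).1.le, (hp i).2.le⟩) hmeas h01 hindep hmarg]
  refine ENNReal.ofReal_le_ofReal ((isLogConcaveSeq_poissonBinomial hp').le_apply_of_moments hnN
    (fun k hk => poissonBinomial_pos hp' (by simpa using hk)) hD ?_ ?_ ?_)
  · simpa [hsum] using sum_sub_mul_poissonBinomial p univ
  · simpa [hsum, hdN] using sum_sub_sq_mul_poissonBinomial p univ
  · simpa [hsum, hdN] using sum_sub_pow_four_mul_poissonBinomial_le p univ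
end
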